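/- arXiv:2403.16343 — 3 statements merged into one kernel-verified Lean document; each statement's English description precedes it below -/
import Mathlib

section
/- Let n be a positive integer, let a ∈ ℂⁿ, and let D ∈ ℂ^{n×n} be Hermitian positive definite. Then the infimum over u ∈ ℂⁿ and w > 0 of w·(|1 − u† a|² + u† D u) − log w − 1 equals −log(1 + a† D⁻¹ a), and it is attained at u = (D + a a†)⁻¹ a and w = (1 − a† (D + a a†)⁻¹ a)⁻¹. -/
open Matrix
open scoped ComplexOrder

/-- The weighted-MSE objective `w·(|1 − u† a|² + u† D u) − log w − 1`. -/
noncomputable def wmseObj {n : ℕ} (a : Fin n → ℂ) (D : Matrix (Fin n) (Fin n) ℂ)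
    (u : Fin n → ℂ) (w : ℝ) : ℝ :=
  w * (Complex.normSq (1 - star u ⬝ᵥ a) + (star u ⬝ᵥ D *ᵥ u).re) - Real.log w - 1

/-!
With `M = D + a a†` and `v = M⁻¹ a`, completing the square gives
`|1 − u† a|² + u† D u = (1 − a† v) + (u − v)† M (u − v)`, so over `u` the mean-square error is
minimized at `v` with value `m = 1 − a† v`, which by Sherman–Morrison equals
`(1 + a† D⁻¹ a)⁻¹`. Over `w > 0`, `w m − log w − 1 ≥ log m` by `log x ≤ x − 1`, with
equality at `w = m⁻¹`.
-/

theorem Real.log_le_mul_sub_log_sub_one {w x : ℝ} (hw : 0 < w) (hx : 0 < x) :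
    Real.log x ≤ w * x - Real.log w - 1 := by
  have := Real.log_le_sub_one_of_pos (mul_pos hw hx)
  rw [Real.log_mul hw.ne' hx.ne'] at this
  linarith

namespace Matrix

variable {n K R : Type*} [Fintype n]

section ShermanMorrison

variable [DecidableEq n] [Field K]

theorem det_add_vecMulVec {D : Matrix n n K} (hD : IsUnit D.det) (a b : n → K) :
    (D + vecMulVec a b).det = D.det * (1 + b ⬝ᵥ D⁻¹ *ᵥ a) := by
  rw [vecMulVec_eq (ι := Unit), det_add_replicateCol_mul_replicateRow hD,
    det_unique (n := Unit), add_apply, one_apply_eq, Matrix.mul_assoc, ← replicateCol_mulVec,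
    replicateRow_mul_replicateCol_apply]

theorem inv_add_vecMulVec_mulVec {D : Matrix n n K} (hD : IsUnit D.det) {a b : n → K}
    (h : 1 + b ⬝ᵥ D⁻¹ *ᵥ a ≠ 0) :
    (D + vecMulVec a b)⁻¹ *ᵥ a = (1 + b ⬝ᵥ D⁻¹ *ᵥ a)⁻¹ • D⁻¹ *ᵥ a := by
  have hM : IsUnit (D + vecMulVec a b).det := by
    rw [det_add_vecMulVec hD]
    exact hD.mul h.isUnit
  have hMx : (D + vecMulVec a b) *ᵥ D⁻¹ *ᵥ a = (1 + b ⬝ᵥ D⁻¹ *ᵥ a) • a := by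
    rw [add_mulVec, mulVec_mulVec, mul_nonsing_inv D hD, one_mulVec, vecMulVec_mulVec,
      op_smul_eq_smul, add_smul, one_smul]
  calc (D + vecMulVec a b)⁻¹ *ᵥ a
      = (D + vecMulVec a b)⁻¹ *ᵥ (1 + b ⬝ᵥ D⁻¹ *ᵥ a)⁻¹ • (D + vecMulVec a b) *ᵥ D⁻¹ *ᵥ a := by
        rw [hMx, inv_smul_smul₀ h]
    _ = (1 + b ⬝ᵥ D⁻¹ *ᵥ a)⁻¹ • D⁻¹ *ᵥ a := by
        rw [mulVec_smul, mulVec_mulVec, nonsing_inv_mul _ hM, one_mulVec]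

end ShermanMorrison

section CompleteSquare

variable [CommRing R] [StarRing R]

theorem star_sub_dotProduct_mulVec_sub {M : Matrix n n R} (hM : M.IsHermitian)
    {v a : n → R} (hv : M *ᵥ v = a) (u : n → R) :
    star (u - v) ⬝ᵥ M *ᵥ (u - v) =
      star u ⬝ᵥ M *ᵥ u - star u ⬝ᵥ a - star a ⬝ᵥ u + star a ⬝ᵥ v := by
  have hvM : star v ᵥ* M = star a := by
    rw [← hv, star_mulVec, hM.eq]
  have hva : star v ⬝ᵥ a = star a ⬝ᵥ v := by rw [← hvM, ← dotProduct_mulVec, hv]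
  rw [star_sub, sub_dotProduct, mulVec_sub, dotProduct_sub, dotProduct_sub, hv,
    dotProduct_mulVec (star v), hvM, hva]
  ring

theorem star_mul_add_dotProduct_mulVec_eq {D : Matrix n n R} (hD : D.IsHermitian)
    {v a : n → R} (hv : (D + vecMulVec a (star a)) *ᵥ v = a) (u : n → R) :
    star (1 - star u ⬝ᵥ a) * (1 - star u ⬝ᵥ a) + star u ⬝ᵥ D *ᵥ u =
      (1 - star a ⬝ᵥ v) + star (u - v) ⬝ᵥ (D + vecMulVec a (star a)) *ᵥ (u - v) := by
  have hM : (D + vecMulVec a (star a)).IsHermitian :=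
    hD.add (by simp [IsHermitian])
  rw [star_sub_dotProduct_mulVec_sub hM hv, add_mulVec, dotProduct_add, vecMulVec_mulVec,
    op_smul_eq_smul, dotProduct_smul, smul_eq_mul, star_sub, star_one, star_dotProduct,
    star_star]
  ring

end CompleteSquare

theorem PosDef.one_sub_re_dotProduct_inv_add_vecMulVec_mulVec [DecidableEq n]
    {D : Matrix n n ℂ} (hD : D.PosDef) (a : n → ℂ) :
    1 - (star a ⬝ᵥ (D + vecMulVec a (star a))⁻¹ *ᵥ a).re =
      (1 + (star a ⬝ᵥ D⁻¹ *ᵥ a).re)⁻¹ := by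
  have hs : 0 ≤ star a ⬝ᵥ D⁻¹ *ᵥ a := hD.inv.posSemidef.dotProduct_mulVec_nonneg a
  obtain ⟨s, hs_nonneg, hs_eq⟩ : ∃ s : ℝ, 0 ≤ s ∧ star a ⬝ᵥ D⁻¹ *ᵥ a = s :=
    ⟨_, (Complex.nonneg_iff.mp hs).1, Complex.eq_re_of_ofReal_le (by rwa [Complex.ofReal_zero])⟩
  have h1s : 1 + star a ⬝ᵥ D⁻¹ *ᵥ a ≠ 0 := by
    rw [hs_eq]
    exact_mod_cast (by positivity : 1 + s ≠ 0)
  rw [inv_add_vecMulVec_mulVec ((isUnit_iff_isUnit_det D).mp hD.isUnit) h1s, dotProduct_smul,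
    smul_eq_mul, hs_eq]
  norm_cast
  field_simp
  ring

end Matrix

theorem wmseObj_eq {n : ℕ} {a : Fin n → ℂ} {D : Matrix (Fin n) (Fin n) ℂ} (hD : D.IsHermitian)
    {v : Fin n → ℂ} (hv : (D + vecMulVec a (star a)) *ᵥ v = a) (u : Fin n → ℂ) (w : ℝ) :
    wmseObj a D u w = w * (1 - (star a ⬝ᵥ v).re +
      (star (u - v) ⬝ᵥ (D + vecMulVec a (star a)) *ᵥ (u - v)).re) - Real.log w - 1 := by
  have hsq := congrArg Complex.re (star_mul_add_dotProduct_mulVec_eq hD hv u)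
  rw [Complex.star_def, ← Complex.normSq_eq_conj_mul_self] at hsq
  simp only [Complex.add_re, Complex.sub_re, Complex.one_re, Complex.ofReal_re] at hsq
  rw [wmseObj, hsq]

theorem wmse_transform_general {n : ℕ} (a : Fin n → ℂ)
    (D : Matrix (Fin n) (Fin n) ℂ) (hD : D.PosDef) :
    IsLeast {y : ℝ | ∃ (u : Fin n → ℂ) (w : ℝ), 0 < w ∧ y = wmseObj a D u w}
      (- Real.log (1 + (star a ⬝ᵥ D⁻¹ *ᵥ a).re)) ∧
    0 < (1 - (star a ⬝ᵥ (D + vecMulVec a (star a))⁻¹ *ᵥ a).re)⁻¹ ∧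
    wmseObj a D ((D + vecMulVec a (star a))⁻¹ *ᵥ a)
        ((1 - (star a ⬝ᵥ (D + vecMulVec a (star a))⁻¹ *ᵥ a).re)⁻¹) =
      - Real.log (1 + (star a ⬝ᵥ D⁻¹ *ᵥ a).re) := by
  set M := D + vecMulVec a (star a)
  set v := M⁻¹ *ᵥ a
  have hM : M.PosDef := hD.add_posSemidef (posSemidef_vecMulVec_self_star a)
  have hv : M *ᵥ v = a := by
    rw [mulVec_mulVec, mul_nonsing_inv _ ((isUnit_iff_isUnit_det M).mp hM.isUnit), one_mulVec]
  have hm : 1 - (star a ⬝ᵥ v).re = (1 + (star a ⬝ᵥ D⁻¹ *ᵥ a).re)⁻¹ :=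
    hD.one_sub_re_dotProduct_inv_add_vecMulVec_mulVec a
  have hs : 0 ≤ (star a ⬝ᵥ D⁻¹ *ᵥ a).re :=
    (Complex.nonneg_iff.mp (hD.inv.posSemidef.dotProduct_mulVec_nonneg a)).1
  have hm_pos : 0 < 1 - (star a ⬝ᵥ v).re := hm ▸ by positivity
  have hlog : Real.log (1 - (star a ⬝ᵥ v).re) = - Real.log (1 + (star a ⬝ᵥ D⁻¹ *ᵥ a).re) := by
    rw [hm, Real.log_inv]
  have hval : wmseObj a D v (1 - (star a ⬝ᵥ v).re)⁻¹ =
      - Real.log (1 + (star a ⬝ᵥ D⁻¹ *ᵥ a).re) := by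
    rw [wmseObj_eq hD.isHermitian hv, sub_self, star_zero, zero_dotProduct, Complex.zero_re,
      add_zero, inv_mul_cancel₀ hm_pos.ne', Real.log_inv, hlog]
    ring
  refine ⟨⟨⟨v, _, inv_pos.mpr hm_pos, hval.symm⟩, ?_⟩, inv_pos.mpr hm_pos, hval⟩
  rintro y ⟨u, w, hw, rfl⟩
  have hq : 0 ≤ (star (u - v) ⬝ᵥ M *ᵥ (u - v)).re := hM.posSemidef.re_dotProduct_nonneg _
  rw [wmseObj_eq hD.isHermitian hv, ← hlog]
  calc Real.log (1 - (star a ⬝ᵥ v).re)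
      ≤ w * (1 - (star a ⬝ᵥ v).re) - Real.log w - 1 := Real.log_le_mul_sub_log_sub_one hw hm_pos
    _ ≤ _ := by gcongr; linarith

/-- The composite weighted-MSE identity: for Hermitian positive definite `D`, the infimum
over `u ∈ ℂⁿ` and `w > 0` of `w·(|1 − u† a|² + u† D u) − log w − 1` equals
`−log(1 + a† D⁻¹ a)`, attained at `u = (D + a a†)⁻¹ a` and
`w = (1 − a† (D + a a†)⁻¹ a)⁻¹`. -/
theorem wmse_transform {n : ℕ} (hn : 0 < n) (a : Fin n → ℂ)
    (D : Matrix (Fin n) (Fin n) ℂ) (hD : D.PosDef) :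
    IsLeast {y : ℝ | ∃ (u : Fin n → ℂ) (w : ℝ), 0 < w ∧ y = wmseObj a D u w}
      (- Real.log (1 + (star a ⬝ᵥ D⁻¹ *ᵥ a).re)) ∧
    0 < (1 - (star a ⬝ᵥ (D + vecMulVec a (star a))⁻¹ *ᵥ a).re)⁻¹ ∧
    wmseObj a D ((D + vecMulVec a (star a))⁻¹ *ᵥ a)
        ((1 - (star a ⬝ᵥ (D + vecMulVec a (star a))⁻¹ *ᵥ a).re)⁻¹) =
      - Real.log (1 + (star a ⬝ᵥ D⁻¹ *ᵥ a).re) :=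
  wmse_transform_general a D hD
end

section
/- Consider the downlink MU-MIMO model with users indexed by the finite set I, channel matrices H_{b'→(k,b)} ∈ ℂ^{N×M}, transmit beamformers v_{k,b} ∈ ℂ^M collected in V, noise power σ² > 0, interference-plus-noise covariances B_{k,b}(V), rates r_{k,b}(V), and sum-least-m utility f_m with 1 ≤ m ≤ |I|. For each family of auxiliary vectors X = (χ_{k,b})_{(k,b)∈I} with χ_{k,b} ∈ ℂ^N, define the transformed rate r̂_{k,b}(X,V) = log(1 + 2·Re(χ_{k,b}† H_{b→(k,b)} v_{k,b}) − χ_{k,b}† B_{k,b}(V) χ_{k,b}) whenever the argument of the logarithm is positive. Then for every V, the supremum over all X for which every such logarithm argument is positive of f_m((r̂_{k,b}(X,V))_{(k,b)∈I}) equals f_m((r_{k,b}(V))_{(k,b)∈I}), and this supremum is attained at χ_{k,b} = B_{k,b}(V)⁻¹ H_{b→(k,b)} v_{k,b} for all (k,b). -/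
open Matrix

/-- The sum-least-`m` (SLqP) utility: the minimum over all subsets `S` of the index set
with `|S| = m` of `∑_{i∈S} x i`, i.e. the sum of the `m` smallest entries of `x`. -/
noncomputable def sumLeast {I : Type*} [Fintype I] (m : ℕ) (x : I → ℝ) : ℝ :=
  sInf {s : ℝ | ∃ S : Finset I, S.card = m ∧ s = ∑ i ∈ S, x i}

/-- The sum-greatest-`m` (SGqP) utility: the maximum over all subsets `S` of the index set
with `|S| = m` of `∑_{i∈S} x i`, i.e. the sum of the `m` largest entries of `x`. -/
noncomputable def sumGreatest {I : Type*} [Fintype I] (m : ℕ) (x : I → ℝ) : ℝ :=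
  sSup {s : ℝ | ∃ S : Finset I, S.card = m ∧ s = ∑ i ∈ S, x i}

section Model

variable {I B' : Type*} [Fintype I] [DecidableEq I] {N M : ℕ}

/-- Interference-plus-noise covariance of user `i`:
`B_i(V) = σ² I + ∑_{j ≠ i} (H_{cell j → i} v_j)(H_{cell j → i} v_j)†`. -/
noncomputable def covIN (cell : I → B') (H : B' → I → Matrix (Fin N) (Fin M) ℂ)
    (σ2 : ℝ) (V : I → Fin M → ℂ) (i : I) : Matrix (Fin N) (Fin N) ℂ :=
  (σ2 : ℂ) • (1 : Matrix (Fin N) (Fin N) ℂ) +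
    ∑ j ∈ Finset.univ.erase i,
      vecMulVec (H (cell j) i *ᵥ V j) (star (H (cell j) i *ᵥ V j))

/-- Achieved rate of user `i`:
`r_i(V) = log(1 + v_i† H_i† B_i(V)⁻¹ H_i v_i)`. -/
noncomputable def rate (cell : I → B') (H : B' → I → Matrix (Fin N) (Fin M) ℂ)
    (σ2 : ℝ) (V : I → Fin M → ℂ) (i : I) : ℝ :=
  Real.log (1 + (star (H (cell i) i *ᵥ V i) ⬝ᵥ
    (covIN cell H σ2 V i)⁻¹ *ᵥ (H (cell i) i *ᵥ V i)).re)

/-- The argument of the logarithm in the QFT-transformed rate: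
`φ_i(X,V) = 1 + 2 Re(χ_i† H_i v_i) − χ_i† B_i(V) χ_i`. -/
noncomputable def qftArg (cell : I → B') (H : B' → I → Matrix (Fin N) (Fin M) ℂ)
    (σ2 : ℝ) (X : I → Fin N → ℂ) (V : I → Fin M → ℂ) (i : I) : ℝ :=
  1 + 2 * (star (X i) ⬝ᵥ (H (cell i) i *ᵥ V i)).re -
    (star (X i) ⬝ᵥ (covIN cell H σ2 V i) *ᵥ X i).re

end Model

/-!
Completing the square: for positive definite `B`,
`2 Re(χ† w) - χ† B χ = w† B⁻¹ w - (χ - B⁻¹ w)† B (χ - B⁻¹ w)`,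
so the left side is maximised exactly at `χ = B⁻¹ w`, with maximum `w† B⁻¹ w`. Taking
`B = B_{k,b}(V)` (positive definite since `σ² > 0`) and `w = H_{b→(k,b)} v_{k,b}`, each
argument of the transformed logarithm is at most `exp r_{k,b}(V)`, with equality at
`χ_{k,b} = B_{k,b}(V)⁻¹ H_{b→(k,b)} v_{k,b}`. Since `f_m` is monotone, the claim follows.
-/

open ComplexOrder

lemma sumLeast_mono {I : Type*} [Fintype I] (m : ℕ) : Monotone (sumLeast (I := I) m) := by
  intro x y hxy
  by_cases hm : ∃ S : Finset I, S.card = m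
  · have hbdd : BddBelow {s : ℝ | ∃ S : Finset I, S.card = m ∧ s = ∑ i ∈ S, x i} :=
      (Set.finite_range fun S : Finset I => ∑ i ∈ S, x i).subset
        (by rintro _ ⟨S, -, rfl⟩; exact ⟨S, rfl⟩) |>.bddBelow
    obtain ⟨S₀, hS₀⟩ := hm
    refine le_csInf ⟨_, S₀, hS₀, rfl⟩ ?_
    rintro _ ⟨S, hS, rfl⟩
    exact (csInf_le hbdd ⟨S, hS, rfl⟩).trans (Finset.sum_le_sum fun i _ => hxy i)
  · have hempty : ∀ z : I → ℝ,
        {s : ℝ | ∃ S : Finset I, S.card = m ∧ s = ∑ i ∈ S, z i} = ∅ :=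
      fun z => Set.eq_empty_of_forall_notMem fun _ ⟨S, hS, _⟩ => hm ⟨S, hS⟩
    simp only [sumLeast, hempty, Real.sInf_empty, le_refl]

section CompleteSquare

variable {n : Type*} [Fintype n] [DecidableEq n] {B : Matrix n n ℂ}

lemma Matrix.IsHermitian.re_two_dotProduct_sub_quadratic_eq (hB : B.IsHermitian)
    (hdet : IsUnit B.det) (w χ : n → ℂ) :
    2 * (star χ ⬝ᵥ w).re - (star χ ⬝ᵥ B *ᵥ χ).re =
      (star w ⬝ᵥ B⁻¹ *ᵥ w).re -
        (star (χ - B⁻¹ *ᵥ w) ⬝ᵥ B *ᵥ (χ - B⁻¹ *ᵥ w)).re := by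
  have hBχ₀ : B *ᵥ (B⁻¹ *ᵥ w) = w := by
    rw [mulVec_mulVec, mul_nonsing_inv _ hdet, one_mulVec]
  have hcross : star (B⁻¹ *ᵥ w) ⬝ᵥ B *ᵥ χ = star (star χ ⬝ᵥ w) := by
    rw [star_dotProduct, star_mulVec, ← dotProduct_mulVec, hB.eq, hBχ₀]
  have hconst : star (B⁻¹ *ᵥ w) ⬝ᵥ w = star w ⬝ᵥ B⁻¹ *ᵥ w := by
    rw [star_mulVec, ← dotProduct_mulVec, hB.inv.eq]
  rw [star_sub, sub_dotProduct, mulVec_sub, dotProduct_sub, dotProduct_sub, hBχ₀, hcross,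
    hconst]
  simp only [Complex.sub_re, Complex.star_def, Complex.conj_re]
  ring

lemma Matrix.PosDef.re_two_dotProduct_sub_quadratic_le (hB : B.PosDef) (w χ : n → ℂ) :
    2 * (star χ ⬝ᵥ w).re - (star χ ⬝ᵥ B *ᵥ χ).re ≤ (star w ⬝ᵥ B⁻¹ *ᵥ w).re := by
  rw [hB.isHermitian.re_two_dotProduct_sub_quadratic_eq
    ((isUnit_iff_isUnit_det _).1 hB.isUnit)]
  exact sub_le_self _ (hB.posSemidef.re_dotProduct_nonneg _)

lemma Matrix.PosDef.re_two_dotProduct_sub_quadratic_inv_mulVec (hB : B.PosDef) (w : n → ℂ) :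
    2 * (star (B⁻¹ *ᵥ w) ⬝ᵥ w).re - (star (B⁻¹ *ᵥ w) ⬝ᵥ B *ᵥ (B⁻¹ *ᵥ w)).re =
      (star w ⬝ᵥ B⁻¹ *ᵥ w).re := by
  rw [hB.isHermitian.re_two_dotProduct_sub_quadratic_eq
    ((isUnit_iff_isUnit_det _).1 hB.isUnit)]
  simp

end CompleteSquare

section Model

variable {I B' : Type*} [Fintype I] [DecidableEq I] {N M : ℕ}
  (cell : I → B') (H : B' → I → Matrix (Fin N) (Fin M) ℂ) {σ2 : ℝ} (V : I → Fin M → ℂ)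

lemma covIN_posDef (hσ : 0 < σ2) (i : I) : (covIN cell H σ2 V i).PosDef :=
  (PosDef.one.smul (Complex.zero_lt_real.2 hσ)).add_posSemidef <|
    posSemidef_sum _ fun _ _ => posSemidef_vecMulVec_self_star _

lemma exp_rate (hσ : 0 < σ2) (i : I) :
    Real.exp (rate cell H σ2 V i) =
      1 + (star (H (cell i) i *ᵥ V i) ⬝ᵥ
        (covIN cell H σ2 V i)⁻¹ *ᵥ (H (cell i) i *ᵥ V i)).re :=
  Real.exp_log <| add_pos_of_pos_of_nonneg one_pos <|
    (covIN_posDef cell H V hσ i).inv.posSemidef.re_dotProduct_nonneg _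

lemma qftArg_le_exp_rate (hσ : 0 < σ2) (X : I → Fin N → ℂ) (i : I) :
    qftArg cell H σ2 X V i ≤ Real.exp (rate cell H σ2 V i) := by
  rw [exp_rate cell H V hσ, qftArg, add_sub_assoc]
  exact add_le_add_right
    ((covIN_posDef cell H V hσ i).re_two_dotProduct_sub_quadratic_le _ _) 1

lemma qftArg_inv_mulVec_eq_exp_rate (hσ : 0 < σ2) (i : I) :
    qftArg cell H σ2 (fun j => (covIN cell H σ2 V j)⁻¹ *ᵥ (H (cell j) j *ᵥ V j)) V i =
      Real.exp (rate cell H σ2 V i) := by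
  rw [exp_rate cell H V hσ, qftArg, add_sub_assoc,
    (covIN_posDef cell H V hσ i).re_two_dotProduct_sub_quadratic_inv_mulVec]

end Model

theorem qft_slqp_equivalence_general {I B' : Type*} [Fintype I] [DecidableEq I] {N M : ℕ}
    (cell : I → B') (H : B' → I → Matrix (Fin N) (Fin M) ℂ)
    (σ2 : ℝ) (hσ : 0 < σ2) (m : ℕ)
    (V : I → Fin M → ℂ) :
    (∀ i, 0 < qftArg cell H σ2
        (fun j => (covIN cell H σ2 V j)⁻¹ *ᵥ (H (cell j) j *ᵥ V j)) V i) ∧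
    sumLeast m (fun i => Real.log (qftArg cell H σ2
        (fun j => (covIN cell H σ2 V j)⁻¹ *ᵥ (H (cell j) j *ᵥ V j)) V i)) =
      sumLeast m (fun i => rate cell H σ2 V i) ∧
    IsGreatest {r : ℝ | ∃ X : I → Fin N → ℂ, (∀ i, 0 < qftArg cell H σ2 X V i) ∧
        r = sumLeast m (fun i => Real.log (qftArg cell H σ2 X V i))}
      (sumLeast m (fun i => rate cell H σ2 V i)) := by
  set X₀ : I → Fin N → ℂ := fun j => (covIN cell H σ2 V j)⁻¹ *ᵥ (H (cell j) j *ᵥ V j)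
  have hX₀ : ∀ i, qftArg cell H σ2 X₀ V i = Real.exp (rate cell H σ2 V i) :=
    qftArg_inv_mulVec_eq_exp_rate cell H V hσ
  have hpos : ∀ i, 0 < qftArg cell H σ2 X₀ V i := fun i => hX₀ i ▸ Real.exp_pos _
  have hval : sumLeast m (fun i => Real.log (qftArg cell H σ2 X₀ V i)) =
      sumLeast m (fun i => rate cell H σ2 V i) := by
    simp only [hX₀, Real.log_exp]
  refine ⟨hpos, hval, ⟨X₀, hpos, hval.symm⟩, ?_⟩
  rintro _ ⟨X, hX, rfl⟩
  exact sumLeast_mono m fun i =>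
    (Real.log_le_iff_le_exp (hX i)).2 (qftArg_le_exp_rate cell H V hσ X i)

/-- Theorem 1 (QFT reformulation of the SLqP rate problem): for every `V`, the supremum
over all auxiliary `X` making every logarithm argument positive of
`f_m((log φ_{k,b}(X,V))_{k,b})` equals `f_m((r_{k,b}(V))_{k,b})`, and this supremum is
attained at `χ_{k,b} = B_{k,b}(V)⁻¹ H_{b→(k,b)} v_{k,b}`. -/
theorem qft_slqp_equivalence {I B' : Type*} [Fintype I] [DecidableEq I] {N M : ℕ}
    (cell : I → B') (H : B' → I → Matrix (Fin N) (Fin M) ℂ)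
    (σ2 : ℝ) (hσ : 0 < σ2) (m : ℕ) (hm1 : 1 ≤ m) (hm2 : m ≤ Fintype.card I)
    (V : I → Fin M → ℂ) :
    (∀ i, 0 < qftArg cell H σ2
        (fun j => (covIN cell H σ2 V j)⁻¹ *ᵥ (H (cell j) j *ᵥ V j)) V i) ∧
    sumLeast m (fun i => Real.log (qftArg cell H σ2
        (fun j => (covIN cell H σ2 V j)⁻¹ *ᵥ (H (cell j) j *ᵥ V j)) V i)) =
      sumLeast m (fun i => rate cell H σ2 V i) ∧
    IsGreatest {r : ℝ | ∃ X : I → Fin N → ℂ, (∀ i, 0 < qftArg cell H σ2 X V i) ∧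
        r = sumLeast m (fun i => Real.log (qftArg cell H σ2 X V i))}
      (sumLeast m (fun i => rate cell H σ2 V i)) :=
  qft_slqp_equivalence_general cell H σ2 hσ m V
end

section
/- Consider the downlink MU-MIMO model with users indexed by the finite set I, channel matrices H_{b'→(k,b)} ∈ ℂ^{N×M}, noise power σ² > 0, and sum-least-m utility f_m with 1 ≤ m ≤ |I|. For beamformers V = (v_{k,b})_{(k,b)∈I}, v_{k,b} ∈ ℂ^M, and auxiliary vectors X = (χ_{k,b})_{(k,b)∈I}, χ_{k,b} ∈ ℂ^N, define φ_{k,b}(X,V) = 1 + 2·Re(χ_{k,b}† H_{b→(k,b)} v_{k,b}) − χ_{k,b}† B_{k,b}(V) χ_{k,b} and, where φ_{k,b}(X,V) > 0, r̂_{k,b}(X,V) = log φ_{k,b}(X,V). Then: (i) for every fixed X, the set of V with φ_{k,b}(X,V) > 0 for all (k,b) is convex, and on this set the function V ↦ f_m((r̂_{k,b}(X,V))_{(k,b)}) is concave; (ii) for every fixed V, the set of X with φ_{k,b}(X,V) > 0 for all (k,b) is convex, and on this set the function X ↦ f_m((r̂_{k,b}(X,V))_{(k,b)}) is concave. -/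
/-!
Expanding the quadratic form gives
`φ_i(X,V) = 1 + 2 Re(χ_i† H_{b→i} v_i) - σ² ∑_k |χ_{i,k}|² - ∑_{j ≠ i} |χ_i† H_{cell j → i} v_j|²`.
The pairing `χ† u` is real-bilinear, so for fixed `X` every term is real-affine or the squared
modulus of a real-linear function of `V`, and symmetrically for fixed `V`; as `σ² ≥ 0`, each `φ_i`
is concave in either block. Superlevel sets of concave functions are convex, `log` is concave and
increasing, and the sum of the `m` smallest entries is a pointwise minimum of sums of concave
functions.
-/

open Matrix

open Set

section Convexity

variable {E : Type*} [AddCommGroup E] [Module ℝ E]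

lemma convexOn_finset_sum {ι : Type*} {s : Set E} (hs : Convex ℝ s) (t : Finset ι)
    {F : ι → E → ℝ} (hF : ∀ j ∈ t, ConvexOn ℝ s (F j)) :
    ConvexOn ℝ s fun x => ∑ j ∈ t, F j x := by
  have := Finset.sum_induction F (ConvexOn ℝ s) (fun _ _ => ConvexOn.add) (convexOn_const 0 hs) hF
  simpa only [Finset.sum_fn] using this

theorem ConcaveOn.log {s : Set E} {f : E → ℝ} (hf : ConcaveOn ℝ s f)
    (hpos : ∀ x ∈ s, 0 < f x) : ConcaveOn ℝ s fun x => Real.log (f x) :=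
  ⟨hf.1, fun x hx y hy _ _ ha hb hab =>
    (strictConcaveOn_log_Ioi.concaveOn.2 (hpos x hx) (hpos y hy) ha hb hab).trans
      (Real.log_le_log (convex_Ioi (0 : ℝ) (hpos x hx) (hpos y hy) ha hb hab)
        (hf.2 hx hy ha hb hab))⟩

lemma convexOn_normSq_comp_linearMap (g : E →ₗ[ℝ] ℂ) :
    ConvexOn ℝ univ fun x => Complex.normSq (g x) := by
  have hsq : (fun x => Complex.normSq (g x)) = (norm ∘ g) ^ 2 := by
    ext x
    exact Complex.normSq_eq_norm_sq (g x)
  rw [hsq]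
  exact (convexOn_univ_norm.comp_linearMap g).pow (fun _ _ => norm_nonneg _) 2

lemma concaveOn_one_add_two_re_sub_sub_sum_normSq {ι : Type*} (ℓ : E →ₗ[ℝ] ℂ) {c : E → ℝ}
    (hc : ConvexOn ℝ univ c) (t : Finset ι) (g : ι → E →ₗ[ℝ] ℂ) :
    ConcaveOn ℝ univ fun x => 1 + 2 * (ℓ x).re - c x - ∑ j ∈ t, Complex.normSq (g j x) := by
  have hℓ : ConcaveOn ℝ univ fun x => 1 + 2 * (ℓ x).re := by
    refine ((((2 : ℝ) • Complex.reLm.comp ℓ).concaveOn convex_univ).add_const 1).congr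
      fun x _ => ?_
    simp [add_comm]
  exact (hℓ.sub hc).sub
    (convexOn_finset_sum convex_univ t fun j _ => convexOn_normSq_comp_linearMap (g j))

end Convexity

section SumLeast

variable {I : Type*} [Fintype I] {m : ℕ} {x : I → ℝ}

lemma finite_setOf_sumLeast (m : ℕ) (x : I → ℝ) :
    {s : ℝ | ∃ S : Finset I, S.card = m ∧ s = ∑ i ∈ S, x i}.Finite :=
  (finite_range fun S : Finset I => ∑ i ∈ S, x i).subset fun _ ⟨S, _, hs⟩ => ⟨S, hs.symm⟩

lemma sumLeast_le {S : Finset I} (hS : S.card = m) : sumLeast m x ≤ ∑ i ∈ S, x i :=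
  csInf_le (finite_setOf_sumLeast m x).bddBelow ⟨S, hS, rfl⟩

lemma exists_sumLeast_eq (hm : m ≤ Fintype.card I) :
    ∃ S : Finset I, S.card = m ∧ sumLeast m x = ∑ i ∈ S, x i := by
  obtain ⟨S, -, hS⟩ := Finset.exists_subset_card_eq (s := Finset.univ) (by simpa using hm)
  have hne : {s : ℝ | ∃ S : Finset I, S.card = m ∧ s = ∑ i ∈ S, x i}.Nonempty := ⟨_, S, hS, rfl⟩
  exact hne.csInf_mem (finite_setOf_sumLeast m x)

lemma sumLeast_of_card_lt (hm : Fintype.card I < m) : sumLeast m x = 0 := by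
  rw [sumLeast, eq_empty_of_forall_notMem (s := {s : ℝ | _}), Real.sInf_empty]
  rintro _ ⟨S, rfl, -⟩
  exact hm.not_ge S.card_le_univ

lemma concaveOn_sumLeast {E : Type*} [AddCommGroup E] [Module ℝ E] {s : Set E}
    (hs : Convex ℝ s) {f : I → E → ℝ} (hf : ∀ i, ConcaveOn ℝ s (f i)) (m : ℕ) :
    ConcaveOn ℝ s fun v => sumLeast m fun i => f i v := by
  rcases lt_or_ge (Fintype.card I) m with hm | hm
  · simpa only [sumLeast_of_card_lt hm] using concaveOn_const 0 hs
  refine ⟨hs, fun v hv w hw a b ha hb hab => ?_⟩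
  obtain ⟨S, hS, hmin⟩ := exists_sumLeast_eq (x := fun i => f i (a • v + b • w)) hm
  calc a • sumLeast m (fun i => f i v) + b • sumLeast m (fun i => f i w)
      ≤ a • ∑ i ∈ S, f i v + b • ∑ i ∈ S, f i w := by
        gcongr <;> exact sumLeast_le hS
    _ = ∑ i ∈ S, (a • f i v + b • f i w) := by
        rw [Finset.sum_add_distrib, Finset.smul_sum, Finset.smul_sum]
    _ ≤ ∑ i ∈ S, f i (a • v + b • w) := Finset.sum_le_sum fun i _ => (hf i).2 hv hw ha hb hab
    _ = sumLeast m (fun i => f i (a • v + b • w)) := hmin.symm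

lemma convex_and_concaveOn_sumLeast_log {E : Type*} [AddCommGroup E] [Module ℝ E]
    {f : I → E → ℝ} (hf : ∀ i, ConcaveOn ℝ univ (f i)) (m : ℕ) :
    Convex ℝ {x | ∀ i, 0 < f i x} ∧
      ConcaveOn ℝ {x | ∀ i, 0 < f i x} fun x => sumLeast m fun i => Real.log (f i x) := by
  have hconvex : Convex ℝ {x | ∀ i, 0 < f i x} := by
    simpa only [ofPred_forall, sep_univ] using convex_iInter fun i => (hf i).convex_gt 0
  exact ⟨hconvex, concaveOn_sumLeast hconvex
    (fun i => ((hf i).subset (subset_univ _) hconvex).log fun _ hx => hx i) m⟩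

end SumLeast

section StarDotProduct

variable {n : Type*} [Fintype n]

noncomputable def starDotProductBilin : (n → ℂ) →ₗ[ℝ] (n → ℂ) →ₗ[ℝ] ℂ :=
  LinearMap.mk₂ ℝ (fun χ u => star χ ⬝ᵥ u) (by simp [add_dotProduct])
    (by simp [smul_dotProduct]) (by simp [dotProduct_add]) (by simp [dotProduct_smul])

lemma re_star_dotProduct_vecMulVec_mulVec (w u : n → ℂ) :
    (star w ⬝ᵥ vecMulVec u (star u) *ᵥ w).re = Complex.normSq (star w ⬝ᵥ u) := by
  rw [vecMulVec_mulVec, dotProduct_smul, star_dotProduct u, MulOpposite.smul_eq_mul_unop,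
    MulOpposite.unop_op, RCLike.star_def, Complex.mul_conj, Complex.ofReal_re]

lemma re_star_dotProduct_smul_one_mulVec [DecidableEq n] (c : ℝ) (w : n → ℂ) :
    (star w ⬝ᵥ ((c : ℂ) • 1 : Matrix n n ℂ) *ᵥ w).re = c * ∑ k, Complex.normSq (w k) := by
  rw [smul_mulVec, one_mulVec, dotProduct_smul, smul_eq_mul, Complex.re_ofReal_mul, dotProduct,
    Complex.re_sum]
  simp only [Pi.star_apply, RCLike.star_def, ← Complex.normSq_eq_conj_mul_self, Complex.ofReal_re]

end StarDotProduct

section Model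

variable {I B' : Type*} [Fintype I] [DecidableEq I] {N M : ℕ}
  (cell : I → B') (H : B' → I → Matrix (Fin N) (Fin M) ℂ)

lemma qftArg_eq (σ2 : ℝ) (X : I → Fin N → ℂ) (V : I → Fin M → ℂ) (i : I) :
    qftArg cell H σ2 X V i = 1 + 2 * (star (X i) ⬝ᵥ (H (cell i) i *ᵥ V i)).re
      - σ2 * ∑ k, Complex.normSq (X i k)
      - ∑ j ∈ Finset.univ.erase i, Complex.normSq (star (X i) ⬝ᵥ (H (cell j) i *ᵥ V j)) := by
  rw [qftArg, covIN, add_mulVec, sum_mulVec, dotProduct_add, dotProduct_sum, Complex.add_re,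
    Complex.re_sum, re_star_dotProduct_smul_one_mulVec]
  simp only [re_star_dotProduct_vecMulVec_mulVec]
  ring

lemma concaveOn_qftArg_V (σ2 : ℝ) (X : I → Fin N → ℂ) (i : I) :
    ConcaveOn ℝ univ fun V => qftArg cell H σ2 X V i := by
  let pair (j : I) : (I → Fin M → ℂ) →ₗ[ℝ] ℂ :=
    starDotProductBilin (X i) ∘ₗ (H (cell j) i).mulVecLin.restrictScalars ℝ ∘ₗ LinearMap.proj j
  simp_rw [qftArg_eq]
  exact concaveOn_one_add_two_re_sub_sub_sum_normSq (pair i) (convexOn_const _ convex_univ) _ pair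

lemma concaveOn_qftArg_X {σ2 : ℝ} (hσ : 0 ≤ σ2) (V : I → Fin M → ℂ) (i : I) :
    ConcaveOn ℝ univ fun X => qftArg cell H σ2 X V i := by
  let pair (j : I) : (I → Fin N → ℂ) →ₗ[ℝ] ℂ :=
    starDotProductBilin.flip (H (cell j) i *ᵥ V j) ∘ₗ LinearMap.proj i
  have hnoise : ConvexOn ℝ univ fun X : I → Fin N → ℂ => σ2 * ∑ k, Complex.normSq (X i k) :=
    (convexOn_finset_sum convex_univ _ fun k _ =>
      convexOn_normSq_comp_linearMap
        (LinearMap.proj k ∘ₗ LinearMap.proj i : (I → Fin N → ℂ) →ₗ[ℝ] ℂ)).smul hσ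
  simp_rw [qftArg_eq]
  exact concaveOn_one_add_two_re_sub_sub_sum_normSq (pair i) hnoise _ pair

end Model

theorem qft_block_concave_general {I B' : Type*} [Fintype I] [DecidableEq I] {N M : ℕ}
    (cell : I → B') (H : B' → I → Matrix (Fin N) (Fin M) ℂ)
    (σ2 : ℝ) (hσ : 0 < σ2) (m : ℕ) :
    (∀ X : I → Fin N → ℂ,
      Convex ℝ {V : I → Fin M → ℂ | ∀ i, 0 < qftArg cell H σ2 X V i} ∧
      ConcaveOn ℝ {V : I → Fin M → ℂ | ∀ i, 0 < qftArg cell H σ2 X V i}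
        (fun V => sumLeast m (fun i => Real.log (qftArg cell H σ2 X V i)))) ∧
    (∀ V : I → Fin M → ℂ,
      Convex ℝ {X : I → Fin N → ℂ | ∀ i, 0 < qftArg cell H σ2 X V i} ∧
      ConcaveOn ℝ {X : I → Fin N → ℂ | ∀ i, 0 < qftArg cell H σ2 X V i}
        (fun X => sumLeast m (fun i => Real.log (qftArg cell H σ2 X V i)))) :=
  ⟨fun X => convex_and_concaveOn_sumLeast_log (fun i => concaveOn_qftArg_V cell H σ2 X i) m,
    fun V => convex_and_concaveOn_sumLeast_log (fun i => concaveOn_qftArg_X cell H hσ.le V i) m⟩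

/-- Theorem 2 (block-concavity of the auxiliary QFT objective): (i) for every fixed `X`,
the set of `V` with all `φ_{k,b}(X,V) > 0` is convex and on it
`V ↦ f_m((log φ_{k,b}(X,V))_{k,b})` is concave; (ii) for every fixed `V`, the set of `X`
with all `φ_{k,b}(X,V) > 0` is convex and on it `X ↦ f_m((log φ_{k,b}(X,V))_{k,b})` is
concave. -/
theorem qft_block_concave {I B' : Type*} [Fintype I] [DecidableEq I] {N M : ℕ}
    (cell : I → B') (H : B' → I → Matrix (Fin N) (Fin M) ℂ)
    (σ2 : ℝ) (hσ : 0 < σ2) (m : ℕ) (hm1 : 1 ≤ m) (hm2 : m ≤ Fintype.card I) :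
    (∀ X : I → Fin N → ℂ,
      Convex ℝ {V : I → Fin M → ℂ | ∀ i, 0 < qftArg cell H σ2 X V i} ∧
      ConcaveOn ℝ {V : I → Fin M → ℂ | ∀ i, 0 < qftArg cell H σ2 X V i}
        (fun V => sumLeast m (fun i => Real.log (qftArg cell H σ2 X V i)))) ∧
    (∀ V : I → Fin M → ℂ,
      Convex ℝ {X : I → Fin N → ℂ | ∀ i, 0 < qftArg cell H σ2 X V i} ∧
      ConcaveOn ℝ {X : I → Fin N → ℂ | ∀ i, 0 < qftArg cell H σ2 X V i}
        (fun X => sumLeast m (fun i => Real.log (qftArg cell H σ2 X V i)))) :=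
  qft_block_concave_general cell H σ2 hσ m
end
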